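/- arXiv:2605.17976 — 6 statements merged into one kernel-verified Lean document; each statement's English description precedes it below -/
import Mathlib

section
/- Let d ∈ ℕ, let μ ∈ ℝ^d, let S be a positive definite real d×d matrix, let a ∈ ℝ^d and λ ∈ ℝ. Then the exponentially tilted measure (multivariateGaussian μ S).tilted (fun x => λ * ⟪a, x⟫) equals multivariateGaussian (μ + λ • (S.mulVec a)) S, where ⟪a, x⟫ = ∑ᵢ aᵢ xᵢ. In words: tilting a multivariate Gaussian by the exponential of a linear functional λ⟨a,·⟩ leaves the covariance matrix S unchanged and shifts the mean by λ·S a. -/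
/-!
Completing the square gives
`λ ⟪a, x⟫ - ½ (x - μ)ᵀ S⁻¹ (x - μ) = c - ½ (x - μ')ᵀ S⁻¹ (x - μ')` with `μ' = μ + λ S a` and `c`
independent of `x`, so `exp (λ ⟪a, ·⟫)` times the density of `N(μ, S)` is `exp c` times the density
of `N(μ', S)`. As the latter integrates to `1`, the normalising constant of the tilt is `exp c`,
and the tilted measure has the density of `N(μ', S)`. That the Gaussian density integrates to `1`
comes from the substitution `x = S^{1/2} y`, which turns `xᵀ S⁻¹ x` into `yᵀ y`.
-/

open MeasureTheory Matrix Real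

/-- The multivariate Gaussian measure on `ℝ^d` with mean `μ` and (positive definite)
covariance matrix `S`: the measure with density
`x ↦ (√((2π)^d det S))⁻¹ exp (-(x-μ)ᵀ S⁻¹ (x-μ) / 2)` with respect to Lebesgue measure. -/
noncomputable def multivariateGaussian {d : ℕ} (μ : Fin d → ℝ)
    (S : Matrix (Fin d) (Fin d) ℝ) : Measure (Fin d → ℝ) :=
  volume.withDensity fun x =>
    ENNReal.ofReal ((Real.sqrt ((2 * Real.pi) ^ d * S.det))⁻¹ *
      Real.exp (-((x - μ) ⬝ᵥ S⁻¹.mulVec (x - μ)) / 2))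

section Tilted

variable {α : Type*} [MeasurableSpace α] {ρ : Measure α} {f p q : α → ℝ} {C : ℝ}

lemma tilted_withDensity_ofReal_of_exp_mul_eq (hf : Measurable f) (hp : Measurable p)
    (hp_nonneg : ∀ x, 0 ≤ p x) (hq : ∫ x, q x ∂ρ = 1) (hC : C ≠ 0)
    (h : ∀ x, exp (f x) * p x = C * q x) :
    (ρ.withDensity fun x ↦ ENNReal.ofReal (p x)).tilted f =
      ρ.withDensity fun x ↦ ENNReal.ofReal (q x) := by
  have hZ : ∫ x, exp (f x) ∂(ρ.withDensity fun x ↦ ENNReal.ofReal (p x)) = C := by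
    rw [integral_withDensity_eq_integral_toReal_smul hp.ennreal_ofReal
      (.of_forall fun _ ↦ ENNReal.ofReal_lt_top)]
    simp_rw [ENNReal.toReal_ofReal (hp_nonneg _), smul_eq_mul, mul_comm (p _), h,
      integral_const_mul, hq, mul_one]
  rw [Measure.tilted, hZ, ← withDensity_mul _ hp.ennreal_ofReal
    ((hf.exp.div_const C).ennreal_ofReal)]
  congr with x
  rw [Pi.mul_apply, ← ENNReal.ofReal_mul (hp_nonneg x), mul_div_assoc', mul_comm (p x), h,
    mul_div_cancel_left₀ _ hC]

end Tilted

section Gaussian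

variable {ι : Type*} [Fintype ι]

lemma integral_exp_neg_dotProduct_self_div_two :
    ∫ y : ι → ℝ, exp (-(y ⬝ᵥ y) / 2) = √((2 * π) ^ Fintype.card ι) := by
  have h (y : ι → ℝ) : exp (-(y ⬝ᵥ y) / 2) = ∏ i, exp (-(1 / 2) * y i ^ 2) := by
    rw [← exp_sum, dotProduct, ← Finset.sum_neg_distrib, Finset.sum_div]
    exact congrArg exp (Finset.sum_congr rfl fun i _ ↦ by ring)
  simp_rw [h]
  rw [integral_fintype_prod_volume_eq_pow (fun t ↦ exp (-(1 / 2) * t ^ 2)), integral_gaussian,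
    one_div, div_inv_eq_mul, mul_comm π, eq_comm,
    ← sqrt_sq (by positivity : 0 ≤ √(2 * π) ^ Fintype.card ι), ← pow_mul,
    mul_comm (Fintype.card ι), pow_mul, sq_sqrt (by positivity)]

variable [DecidableEq ι]

lemma dotProduct_inv_mulVec_sub_mulVec {S : Matrix ι ι ℝ} (hS : S.IsSymm) (hdet : IsUnit S.det)
    (u v : ι → ℝ) :
    (u - S *ᵥ v) ⬝ᵥ S⁻¹ *ᵥ (u - S *ᵥ v) = u ⬝ᵥ S⁻¹ *ᵥ u - 2 * (v ⬝ᵥ u) + v ⬝ᵥ S *ᵥ v := by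
  have hSv : S *ᵥ v = v ᵥ* S := by rw [← hS.eq, mulVec_transpose, hS.eq]
  have hcancel : S⁻¹ *ᵥ S *ᵥ v = v := by rw [mulVec_mulVec, nonsing_inv_mul S hdet, one_mulVec]
  have hcross : S *ᵥ v ⬝ᵥ S⁻¹ *ᵥ u = v ⬝ᵥ u := by
    rw [hSv, dotProduct_mulVec, vecMul_vecMul, mul_nonsing_inv S hdet, vecMul_one]
  rw [mulVec_sub, sub_dotProduct, dotProduct_sub, dotProduct_sub, hcancel, hcross, dotProduct_comm u v,
    dotProduct_comm (S *ᵥ v) v]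
  ring

lemma integral_comp_mulVec {M : Matrix ι ι ℝ} (hM : M.det ≠ 0) {g : (ι → ℝ) → ℝ}
    (hg : AEStronglyMeasurable g volume) :
    ∫ x, g (M *ᵥ x) = |M.det|⁻¹ * ∫ y, g y := by
  have hmap := Real.map_matrix_volume_pi_eq_smul_volume_pi hM
  change ∫ x, g (toLin' M x) = _
  rw [← integral_map (toLin' M).continuous_of_finiteDimensional.aemeasurable
    (hmap ▸ hg.smul_measure _), hmap, integral_smul_measure, ENNReal.toReal_ofReal (abs_nonneg _),
    abs_inv, smul_eq_mul]

open scoped MatrixOrder in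
lemma Matrix.PosDef.exists_isSymm_mul_self_eq {S : Matrix ι ι ℝ} (hS : S.PosDef) :
    ∃ A : Matrix ι ι ℝ, A.IsSymm ∧ A * A = S ∧ A.det = √S.det :=
  ⟨CFC.sqrt S, isHermitian_iff_isSymm.1 (CFC.sqrt_nonneg S).posSemidef.isHermitian,
    CFC.sqrt_mul_sqrt_self S hS.posSemidef.nonneg, by simpa using hS.posSemidef.det_sqrt⟩

lemma integral_exp_neg_dotProduct_inv_mulVec_div_two {S : Matrix ι ι ℝ} (hS : S.PosDef) :
    ∫ x : ι → ℝ, exp (-(x ⬝ᵥ S⁻¹ *ᵥ x) / 2) = √((2 * π) ^ Fintype.card ι * S.det) := by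
  obtain ⟨A, hA_symm, hAA, hA_det⟩ := hS.exists_isSymm_mul_self_eq
  have hS_det : 0 < √S.det := sqrt_pos.2 hS.det_pos
  have hA_unit : IsUnit A.det := by rw [hA_det]; exact hS_det.ne'.isUnit
  have hquad (y : ι → ℝ) : A *ᵥ y ⬝ᵥ S⁻¹ *ᵥ A *ᵥ y = y ⬝ᵥ y := by
    have hAy : A *ᵥ y = y ᵥ* A := by rw [← vecMul_transpose, hA_symm.eq]
    rw [mulVec_mulVec, dotProduct_mulVec, hAy, vecMul_vecMul, ← hAA, Matrix.mul_inv_rev,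
      mul_assoc A⁻¹, nonsing_inv_mul A hA_unit, mul_one, mul_nonsing_inv A hA_unit, vecMul_one]
  have hcont : Continuous fun x : ι → ℝ ↦ exp (-(x ⬝ᵥ S⁻¹ *ᵥ x) / 2) := by
    simp only [dotProduct, mulVec]; fun_prop
  have := integral_comp_mulVec hA_unit.ne_zero hcont.aestronglyMeasurable
  simp only [hquad] at this
  rw [integral_exp_neg_dotProduct_self_div_two, hA_det, abs_of_pos hS_det,
    eq_inv_mul_iff_mul_eq₀ hS_det.ne'] at this
  rw [← this, sqrt_mul (by positivity), mul_comm]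

end Gaussian

section MultivariateGaussian

variable {d : ℕ}

noncomputable def multivariateGaussianPDF (μ : Fin d → ℝ) (S : Matrix (Fin d) (Fin d) ℝ)
    (x : Fin d → ℝ) : ℝ :=
  (√((2 * π) ^ d * S.det))⁻¹ * exp (-((x - μ) ⬝ᵥ S⁻¹ *ᵥ (x - μ)) / 2)

lemma multivariateGaussian_eq_withDensity (μ : Fin d → ℝ) (S : Matrix (Fin d) (Fin d) ℝ) :
    multivariateGaussian μ S =
      volume.withDensity fun x ↦ ENNReal.ofReal (multivariateGaussianPDF μ S x) :=
  rfl

lemma multivariateGaussianPDF_nonneg (μ : Fin d → ℝ) (S : Matrix (Fin d) (Fin d) ℝ)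
    (x : Fin d → ℝ) : 0 ≤ multivariateGaussianPDF μ S x := by
  unfold multivariateGaussianPDF; positivity

lemma measurable_multivariateGaussianPDF (μ : Fin d → ℝ) (S : Matrix (Fin d) (Fin d) ℝ) :
    Measurable (multivariateGaussianPDF μ S) := by
  unfold multivariateGaussianPDF; simp only [dotProduct, mulVec, Pi.sub_apply]; fun_prop

lemma integral_multivariateGaussianPDF (μ : Fin d → ℝ) {S : Matrix (Fin d) (Fin d) ℝ}
    (hS : S.PosDef) : ∫ x, multivariateGaussianPDF μ S x = 1 := by
  have hZ : 0 < (2 * π) ^ d * S.det := mul_pos (pow_pos two_pi_pos d) hS.det_pos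
  unfold multivariateGaussianPDF
  rw [integral_const_mul,
    integral_sub_right_eq_self (fun x ↦ exp (-(x ⬝ᵥ S⁻¹ *ᵥ x) / 2)) μ,
    integral_exp_neg_dotProduct_inv_mulVec_div_two hS, Fintype.card_fin,
    inv_mul_cancel₀ (sqrt_pos.2 hZ).ne']

lemma exp_mul_multivariateGaussianPDF (μ : Fin d → ℝ) {S : Matrix (Fin d) (Fin d) ℝ}
    (hS : S.PosDef) (a : Fin d → ℝ) (lam : ℝ) (x : Fin d → ℝ) :
    exp (lam * (a ⬝ᵥ x)) * multivariateGaussianPDF μ S x =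
      exp (lam * (a ⬝ᵥ μ) + lam ^ 2 * (a ⬝ᵥ S *ᵥ a) / 2) *
        multivariateGaussianPDF (μ + lam • S *ᵥ a) S x := by
  have hsq := dotProduct_inv_mulVec_sub_mulVec (isHermitian_iff_isSymm.1 hS.isHermitian)
    hS.det_pos.ne'.isUnit (x - μ) (lam • a)
  rw [mulVec_smul, sub_sub] at hsq
  have hexp : lam * (a ⬝ᵥ x) + -((x - μ) ⬝ᵥ S⁻¹ *ᵥ (x - μ)) / 2 =
      lam * (a ⬝ᵥ μ) + lam ^ 2 * (a ⬝ᵥ S *ᵥ a) / 2 +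
        -((x - (μ + lam • S *ᵥ a)) ⬝ᵥ S⁻¹ *ᵥ (x - (μ + lam • S *ᵥ a))) / 2 := by
    rw [hsq]
    simp only [smul_dotProduct, dotProduct_smul, smul_eq_mul, dotProduct_sub]
    ring
  rw [multivariateGaussianPDF, multivariateGaussianPDF, mul_left_comm, mul_left_comm (exp _),
    ← exp_add, ← exp_add, hexp]

end MultivariateGaussian

/-- Tilting a multivariate Gaussian by the exponential of a linear functional `λ ⟨a, ·⟩`
leaves the covariance matrix `S` unchanged and shifts the mean by `λ • S a`. -/
theorem tilted_multivariateGaussian {d : ℕ} (μ : Fin d → ℝ)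
    (S : Matrix (Fin d) (Fin d) ℝ) (hS : S.PosDef) (a : Fin d → ℝ) (lam : ℝ) :
    (multivariateGaussian μ S).tilted (fun x => lam * (a ⬝ᵥ x)) =
      multivariateGaussian (μ + lam • S.mulVec a) S := by
  rw [multivariateGaussian_eq_withDensity, multivariateGaussian_eq_withDensity]
  exact tilted_withDensity_ofReal_of_exp_mul_eq (by simp only [dotProduct]; fun_prop)
    (measurable_multivariateGaussianPDF μ S) (multivariateGaussianPDF_nonneg μ S)
    (integral_multivariateGaussianPDF _ hS) (exp_pos _).ne'
    (exp_mul_multivariateGaussianPDF μ hS a lam)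
end

section
/- Let E be a separable real Banach space, let μ be a Gaussian probability measure on E, let L : E → ℝ be a continuous linear functional and λ ∈ ℝ, and let μ_λ = μ.tilted (fun x => λ * L x). Then for every continuous linear functional φ : E → ℝ, the mean of φ is shifted by λ times the covariance of L and φ: ∫ φ x dμ_λ(x) = ∫ φ x dμ(x) + λ * Cov_μ(L, φ), where Cov_μ(L, φ) := ∫ (L x − ∫ L dμ) * (φ x − ∫ φ dμ) dμ(x). -/
/-!
Under `μ.tilted (λ L ·)` the moment generating function of `φ` is
`t ↦ E_μ[exp (λ L + t φ)] / E_μ[exp (λ L)]`. Both functionals `λ L + t φ` and `λ L` are Gaussian,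
so expanding their variances turns this quotient into `exp ((E φ + λ Cov(L, φ)) t + Var φ t² / 2)`,
the moment generating function of `N(E φ + λ Cov(L, φ), Var φ)`. A mean is the derivative at `0`
of the moment generating function, so the two means agree.
-/

open MeasureTheory ProbabilityTheory
open scoped NNReal

/-- A measure `μ` on a real normed space `E` is Gaussian if the pushforward of `μ` by every
continuous linear functional `L : E → ℝ` is a one-dimensional Gaussian measure. -/
def IsGaussianMeasure {E : Type*} [NormedAddCommGroup E] [NormedSpace ℝ E]
    [MeasurableSpace E] (μ : Measure E) : Prop :=
  ∀ L : E →L[ℝ] ℝ, ∃ (m : ℝ) (v : ℝ≥0), μ.map L = gaussianReal m v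

open Real

namespace ProbabilityTheory

section Moments

variable {Ω Ω' : Type*} {mΩ : MeasurableSpace Ω} {mΩ' : MeasurableSpace Ω'}
  {μ : Measure Ω} {ν : Measure Ω'}

lemma integral_eq_of_mgf_eq [IsProbabilityMeasure μ] {X : Ω → ℝ} {Y : Ω' → ℝ}
    (h : mgf X μ = mgf Y ν) (hY : 0 ∈ interior (integrableExpSet Y ν)) : μ[X] = ν[Y] := by
  have hX : 0 ∈ interior (integrableExpSet X μ) := by rwa [integrableExpSet_eq_of_mgf h]
  rw [← deriv_mgf_zero hX, ← deriv_mgf_zero hY, h]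

lemma mgf_tilted_mul (X Y : Ω → ℝ) (t s : ℝ) :
    mgf Y (μ.tilted (t * X ·)) s = (∫ ω, exp (t * X ω + s * Y ω) ∂μ) / mgf X μ t := by
  rw [mgf, integral_tilted_mul_eq_mgf]
  simp_rw [smul_eq_mul, div_mul_eq_mul_div, ← exp_add, integral_div]

end Moments

namespace IsGaussian

section Dual

variable {E : Type*} [TopologicalSpace E] [AddCommMonoid E] [Module ℝ E] {mE : MeasurableSpace E}
  {μ : Measure E} [IsGaussian μ]

lemma mgf_dual (L : StrongDual ℝ E) (t : ℝ) :
    mgf L μ t = exp (μ[L] * t + Var[L; μ] * t ^ 2 / 2) := by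
  rw [mgf_gaussianReal (map_eq_gaussianReal L), Real.coe_toNNReal _ (variance_nonneg _ _)]

lemma integrable_exp_mul_dual (L : StrongDual ℝ E) (t : ℝ) :
    Integrable (fun x ↦ exp (t * L x)) μ :=
  mgf_pos_iff.mp (by rw [mgf_dual]; positivity)

lemma integral_exp_dual (L : StrongDual ℝ E) :
    ∫ x, exp (L x) ∂μ = exp (μ[L] + Var[L; μ] / 2) := by
  simpa [mgf] using mgf_dual (μ := μ) L 1

end Dual

variable {E : Type*} [NormedAddCommGroup E] [NormedSpace ℝ E] [MeasurableSpace E] [BorelSpace E]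
  {μ : Measure E} [IsGaussian μ]

lemma mgf_tilted_dual (L φ : StrongDual ℝ E) (lam : ℝ) :
    mgf φ (μ.tilted (lam * L ·)) =
      mgf id (gaussianReal (μ[φ] + lam * cov[L, φ; μ]) Var[φ; μ].toNNReal) := by
  ext t
  have hmean : ∫ x, lam * L x + t * φ x ∂μ = lam * μ[L] + t * μ[φ] := by
    rw [integral_add (by fun_prop) (by fun_prop), integral_const_mul, integral_const_mul]
  have hvar : Var[lam • L + t • φ; μ] =
      lam ^ 2 * Var[L; μ] + 2 * lam * t * cov[L, φ; μ] + t ^ 2 * Var[φ; μ] := by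
    rw [FunLike.coe_add, FunLike.coe_smul, FunLike.coe_smul,
      variance_add ((memLp_dual μ L 2 (by simp)).const_smul lam)
        ((memLp_dual μ φ 2 (by simp)).const_smul t),
      variance_smul, variance_smul, covariance_smul_left, covariance_smul_right]
    ring
  have hexp := integral_exp_dual (μ := μ) (lam • L + t • φ)
  simp only [add_apply, smul_apply, smul_eq_mul] at hexp
  rw [mgf_tilted_mul, hexp, hmean, hvar, mgf_dual, mgf_id_gaussianReal,
    Real.coe_toNNReal _ (variance_nonneg _ _), ← exp_sub]
  ring_nf

theorem integral_tilted_dual (L φ : StrongDual ℝ E) (lam : ℝ) :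
    ∫ x, φ x ∂(μ.tilted (lam * L ·)) = μ[φ] + lam * cov[L, φ; μ] := by
  have : IsProbabilityMeasure (μ.tilted (lam * L ·)) :=
    isProbabilityMeasure_tilted (integrable_exp_mul_dual L lam)
  rw [← integral_id_gaussianReal (μ := μ[φ] + lam * cov[L, φ; μ]) (v := Var[φ; μ].toNNReal)]
  exact integral_eq_of_mgf_eq (mgf_tilted_dual L φ lam) (by simp)

end IsGaussian

end ProbabilityTheory

theorem integral_tilted_gaussian_eq_add_cov_general {E : Type*} [NormedAddCommGroup E]
    [NormedSpace ℝ E] [MeasurableSpace E] [BorelSpace E]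
    (μ : Measure E) (hμ : IsGaussianMeasure μ)
    (L : E →L[ℝ] ℝ) (lam : ℝ) (φ : E →L[ℝ] ℝ) :
    ∫ x, φ x ∂(μ.tilted fun x => lam * L x) =
      ∫ x, φ x ∂μ +
        lam * ∫ x, (L x - ∫ y, L y ∂μ) * (φ x - ∫ y, φ y ∂μ) ∂μ := by
  have : IsGaussian μ := isGaussian_of_map_eq_gaussianReal hμ
  exact IsGaussian.integral_tilted_dual L φ lam

/-- Mean shift under exponential tilting of a Gaussian measure: for the tilted measure
`μ_λ = μ.tilted (λ • L)` and any continuous linear functional `φ`,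
`∫ φ dμ_λ = ∫ φ dμ + λ * Cov_μ(L, φ)`. -/
theorem integral_tilted_gaussian_eq_add_cov {E : Type*} [NormedAddCommGroup E]
    [NormedSpace ℝ E] [CompleteSpace E] [TopologicalSpace.SeparableSpace E]
    [MeasurableSpace E] [BorelSpace E]
    (μ : Measure E) [IsProbabilityMeasure μ] (hμ : IsGaussianMeasure μ)
    (L : E →L[ℝ] ℝ) (lam : ℝ) (φ : E →L[ℝ] ℝ) :
    ∫ x, φ x ∂(μ.tilted fun x => lam * L x) =
      ∫ x, φ x ∂μ +
        lam * ∫ x, (L x - ∫ y, L y ∂μ) * (φ x - ∫ y, φ y ∂μ) ∂μ :=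
  integral_tilted_gaussian_eq_add_cov_general μ hμ L lam φ
end

section
/- Let E be a separable real Banach space, let μ be a Gaussian probability measure on E, let L : E → ℝ be a continuous linear functional and λ ∈ ℝ, and let μ_λ = μ.tilted (fun x => λ * L x). Then the covariance structure is unchanged by the tilt: for all continuous linear functionals φ, ψ : E → ℝ, Cov_{μ_λ}(φ, ψ) = Cov_μ(φ, ψ), where Cov_ν(φ, ψ) := ∫ (φ x − ∫ φ dν)(ψ x − ∫ ψ dν) dν(x). -/
open MeasureTheory ProbabilityTheory
open scoped NNReal

/-!
Since `a • L + t • φ` has a Gaussian law, `∫ exp (a L + t φ) dμ = exp (mean + variance / 2)`,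
and the variance is the quadratic form `a² Var L + 2 a t Cov(L, φ) + t² Var φ`. Dividing by the
normalising constant `∫ exp (λ L) dμ`, the moment generating function of `φ` under `μ_λ` is
`t ↦ exp ((μ[φ] + λ Cov(L, φ)) t + Var[φ] t² / 2)`: under the tilt, `φ` is Gaussian with a shifted
mean and unchanged variance. Hence `μ_λ` is Gaussian with the variances of `μ`, and by
polarization it has the same covariances.
-/

open Real

namespace ProbabilityTheory

section Real

variable {Ω : Type*} {mΩ : MeasurableSpace Ω} {ν : Measure Ω}

lemma map_eq_gaussianReal_of_mgf_eq [IsFiniteMeasure ν] {X : Ω → ℝ} (hX : AEMeasurable X ν)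
    {m : ℝ} {v : ℝ≥0} (h : mgf X ν = fun t ↦ exp (m * t + v * t ^ 2 / 2)) :
    ν.map X = gaussianReal m v := by
  -- The Gaussian mgf is finite everywhere, so analytic continuation matches the complex mgfs
  -- on all of `ℂ`.
  have h_eq := eqOn_complexMGF_of_mgf (X := id) (μ := gaussianReal m v) (Y := X) (μ' := ν)
    (by rw [mgf_id_gaussianReal, h])
  simp only [integrableExpSet_id_gaussianReal, interior_univ, Set.mem_univ, Set.ofPred_true]
    at h_eq
  simpa using (Measure.ext_of_complexMGF_eq aemeasurable_id hX (funext fun z ↦ h_eq trivial)).symm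

lemma covariance_eq_variance_add_sub [IsFiniteMeasure ν] {X Y : Ω → ℝ} (hX : MemLp X 2 ν)
    (hY : MemLp Y 2 ν) : cov[X, Y; ν] = (Var[X + Y; ν] - Var[X; ν] - Var[Y; ν]) / 2 := by
  rw [variance_add hX hY]
  ring

end Real

section Dual

variable {E : Type*} [NormedAddCommGroup E] [NormedSpace ℝ E] [MeasurableSpace E]
  {μ : Measure E} [IsGaussian μ]

lemma IsGaussian.integral_exp_dual_s6 (L : StrongDual ℝ E) :
    ∫ x, exp (L x) ∂μ = exp (μ[L] + Var[L; μ] / 2) := by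
  simpa [mgf, Real.coe_toNNReal _ (variance_nonneg _ _)] using
    mgf_gaussianReal (IsGaussian.map_eq_gaussianReal L) 1

variable [BorelSpace E]

lemma IsGaussian.integral_smul_add_smul (a b : ℝ) (L φ : StrongDual ℝ E) :
    μ[a • L + b • φ] = a * μ[L] + b * μ[φ] := by
  simp only [add_apply, smul_apply, smul_eq_mul]
  rw [integral_add ((integrable_dual μ L).const_mul a) ((integrable_dual μ φ).const_mul b),
    integral_const_mul, integral_const_mul]

lemma IsGaussian.variance_smul_add_smul (a b : ℝ) (L φ : StrongDual ℝ E) :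
    Var[a • L + b • φ; μ] =
      a ^ 2 * Var[L; μ] + 2 * a * b * cov[L, φ; μ] + b ^ 2 * Var[φ; μ] := by
  rw [FunLike.coe_add, FunLike.coe_smul, FunLike.coe_smul,
    variance_add ((memLp_dual μ L 2 (by simp)).const_smul a)
      ((memLp_dual μ φ 2 (by simp)).const_smul b),
    variance_smul, variance_smul, covariance_smul_left, covariance_smul_right]
  ring

lemma IsGaussian.mgf_dual_tilted (L φ : StrongDual ℝ E) (lam : ℝ) :
    mgf φ (μ.tilted fun x ↦ lam * L x) =
      fun t ↦ exp ((μ[φ] + lam * cov[L, φ; μ]) * t + Var[φ; μ] * t ^ 2 / 2) := by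
  have h_exp (a b : ℝ) : ∫ x, exp (a * L x + b * φ x) ∂μ =
      exp (a * μ[L] + b * μ[φ] +
        (a ^ 2 * Var[L; μ] + 2 * a * b * cov[L, φ; μ] + b ^ 2 * Var[φ; μ]) / 2) := by
    have h := integral_exp_dual_s6 (μ := μ) (a • L + b • φ)
    rw [integral_smul_add_smul, variance_smul_add_smul] at h
    simpa using h
  ext t
  have h_norm : ∫ x, exp (lam * L x) ∂μ = ∫ x, exp (lam * L x + 0 * φ x) ∂μ := by simp
  rw [mgf, integral_tilted, h_norm]
  simp_rw [smul_eq_mul, div_mul_eq_mul_div, ← exp_add]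
  rw [integral_div, h_exp, h_exp, ← exp_sub]
  ring_nf

lemma IsGaussian.map_dual_tilted (L φ : StrongDual ℝ E) (lam : ℝ) :
    (μ.tilted fun x ↦ lam * L x).map φ =
      gaussianReal (μ[φ] + lam * cov[L, φ; μ]) Var[φ; μ].toNNReal :=
  map_eq_gaussianReal_of_mgf_eq (by fun_prop)
    (by rw [mgf_dual_tilted, Real.coe_toNNReal _ (variance_nonneg _ _)])

instance isGaussian_tilted_dual (L : StrongDual ℝ E) (lam : ℝ) :
    IsGaussian (μ.tilted fun x ↦ lam * L x) :=
  isGaussian_of_map_eq_gaussianReal fun φ ↦ ⟨_, _, IsGaussian.map_dual_tilted L φ lam⟩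

lemma IsGaussian.variance_dual_tilted (L φ : StrongDual ℝ E) (lam : ℝ) :
    Var[φ; μ.tilted fun x ↦ lam * L x] = Var[φ; μ] := by
  rw [← variance_id_map (by fun_prop), map_dual_tilted, variance_id_gaussianReal,
    Real.coe_toNNReal _ (variance_nonneg _ _)]

lemma IsGaussian.covariance_dual_eq_of_variance_eq {ν : Measure E} [IsGaussian ν]
    (h : ∀ L : StrongDual ℝ E, Var[L; ν] = Var[L; μ]) (φ ψ : StrongDual ℝ E) :
    cov[φ, ψ; ν] = cov[φ, ψ; μ] := by
  rw [covariance_eq_variance_add_sub (memLp_dual ν φ 2 (by simp)) (memLp_dual ν ψ 2 (by simp)),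
    covariance_eq_variance_add_sub (memLp_dual μ φ 2 (by simp)) (memLp_dual μ ψ 2 (by simp)),
    ← FunLike.coe_add, h, h, h]

end Dual

end ProbabilityTheory

theorem cov_tilted_gaussian_eq_general {E : Type*} [NormedAddCommGroup E]
    [NormedSpace ℝ E]
    [MeasurableSpace E] [BorelSpace E]
    (μ : Measure E) (hμ : IsGaussianMeasure μ)
    (L : E →L[ℝ] ℝ) (lam : ℝ) (φ ψ : E →L[ℝ] ℝ) :
    (∫ x, (φ x - ∫ y, φ y ∂(μ.tilted fun z => lam * L z)) *
        (ψ x - ∫ y, ψ y ∂(μ.tilted fun z => lam * L z)) ∂(μ.tilted fun z => lam * L z)) =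
      ∫ x, (φ x - ∫ y, φ y ∂μ) * (ψ x - ∫ y, ψ y ∂μ) ∂μ := by
  have : IsGaussian μ := isGaussian_of_map_eq_gaussianReal hμ
  exact IsGaussian.covariance_dual_eq_of_variance_eq (IsGaussian.variance_dual_tilted L · lam) φ ψ

/-- The covariance structure of a Gaussian measure is unchanged by exponential tilting:
for `μ_λ = μ.tilted (λ • L)` and all continuous linear functionals `φ, ψ`,
`Cov_{μ_λ}(φ, ψ) = Cov_μ(φ, ψ)`. -/
theorem cov_tilted_gaussian_eq {E : Type*} [NormedAddCommGroup E]
    [NormedSpace ℝ E] [CompleteSpace E] [TopologicalSpace.SeparableSpace E]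
    [MeasurableSpace E] [BorelSpace E]
    (μ : Measure E) [IsProbabilityMeasure μ] (hμ : IsGaussianMeasure μ)
    (L : E →L[ℝ] ℝ) (lam : ℝ) (φ ψ : E →L[ℝ] ℝ) :
    (∫ x, (φ x - ∫ y, φ y ∂(μ.tilted fun z => lam * L z)) *
        (ψ x - ∫ y, ψ y ∂(μ.tilted fun z => lam * L z)) ∂(μ.tilted fun z => lam * L z)) =
      ∫ x, (φ x - ∫ y, φ y ∂μ) * (ψ x - ∫ y, ψ y ∂μ) ∂μ :=
  cov_tilted_gaussian_eq_general μ hμ L lam φ ψ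
end

section
/- Let X be a nonempty type, let f, m, s : X → ℝ with s nonnegative, and let b ≥ 0. Suppose the uniform confidence bound |f x − m x| ≤ b * s x holds for all x ∈ X, and suppose x_t ∈ X maximizes the upper confidence bound, i.e. m x + b * s x ≤ m x_t + b * s x_t for all x ∈ X. Then the instantaneous regret at x_t is at most twice the confidence width: for every x⋆ ∈ X, f x⋆ − f x_t ≤ 2 * b * s x_t. -/
theorem ucb_one_step_regret_general {X : Type*} (f m s : X → ℝ)
    (b : ℝ)
    (hconf : ∀ x, |f x - m x| ≤ b * s x) (xt : X)
    (hmax : ∀ x, m x + b * s x ≤ m xt + b * s xt) (xstar : X) :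
    f xstar - f xt ≤ 2 * b * s xt := by
  have hupper : f xstar ≤ m xstar + b * s xstar := by
    linarith [(abs_le.mp (hconf xstar)).2]
  have hlower : m xt - b * s xt ≤ f xt := by
    linarith [(abs_le.mp (hconf xt)).1]
  linarith [hmax xstar]

/-- One-step regret inequality for UCB selection: if `|f x - m x| ≤ b * s x` uniformly and
`x_t` maximizes the upper confidence bound `m x + b * s x`, then for every `x⋆` the
instantaneous regret satisfies `f x⋆ - f x_t ≤ 2 * b * s x_t`. -/
theorem ucb_one_step_regret {X : Type*} [Nonempty X] (f m s : X → ℝ)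
    (hs : ∀ x, 0 ≤ s x) (b : ℝ) (hb : 0 ≤ b)
    (hconf : ∀ x, |f x - m x| ≤ b * s x) (xt : X)
    (hmax : ∀ x, m x + b * s x ≤ m xt + b * s xt) (xstar : X) :
    f xstar - f xt ≤ 2 * b * s xt :=
  ucb_one_step_regret_general f m s b hconf xt hmax xstar
end

section
/- Let T ∈ ℕ, let σ > 0, and let K be a real symmetric positive semidefinite T×T matrix. For each t ∈ Fin T, let K_t be the leading principal t×t submatrix of K (on the indices i < t), let k_t ∈ ℝ^t be the vector with entries (K i t) for i < t, and define the predictive variance s_t² := K t t − k_tᵀ (K_t + σ² I_t)⁻¹ k_t. Then the information gain telescopes: Matrix.det (1 + σ⁻² • K) = ∏_{t=0}^{T−1} (1 + σ⁻² * s_t²); equivalently, (1/2) * Real.log (Matrix.det (1 + σ⁻² • K)) = (1/2) * ∑_{t} Real.log (1 + σ⁻² * s_t²). -/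
/-! With `N = K + σ² • 1`, which is positive definite, expanding the determinant of each leading
block of `N` along its last row and column (Schur complement) gives `det N = ∏ₜ pₜ` with pivots
`pₜ = N t t - kₜᵀ Nₜ⁻¹ kₜ = σ² + sₜ²`. Since `N = σ² (1 + σ⁻² K)`, dividing by `σ^(2T)` gives the
product formula. Each pivot is a ratio of two positive leading minors, so the logarithm of the
product splits into a sum. -/

open Matrix

namespace Matrix

section LeadingSchurComplement

variable {R : Type*} [CommRing R]

theorem det_succ_eq_det_castSucc_mul_schur {n : ℕ} (M : Matrix (Fin (n + 1)) (Fin (n + 1)) R)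
    (hA : IsUnit (M.submatrix Fin.castSucc Fin.castSucc).det) :
    M.det = (M.submatrix Fin.castSucc Fin.castSucc).det *
      (M (Fin.last n) (Fin.last n) - (fun j => M (Fin.last n) j.castSucc) ⬝ᵥ
        (M.submatrix Fin.castSucc Fin.castSucc)⁻¹ *ᵥ fun i => M i.castSucc (Fin.last n)) := by
  let _ := (M.submatrix Fin.castSucc Fin.castSucc).invertibleOfIsUnitDet hA
  have hblocks : M.submatrix finSumFinEquiv finSumFinEquiv =
      fromBlocks (M.submatrix Fin.castSucc Fin.castSucc)
        (of fun i (_ : Fin 1) => M i.castSucc (Fin.last n))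
        (of fun (_ : Fin 1) j => M (Fin.last n) j.castSucc)
        (of fun _ _ => M (Fin.last n) (Fin.last n)) := by
    ext (i | i) (j | j) <;> simp [Fin.fin_one_eq_zero] <;> rfl
  rw [← det_submatrix_equiv_self finSumFinEquiv, hblocks, det_fromBlocks₁₁, invOf_eq_nonsing_inv,
    det_fin_one, sub_apply, dotProduct_mulVec]
  rfl

variable {T : ℕ}

def leadingSubmatrix (N : Matrix (Fin T) (Fin T) R) {t : ℕ} (h : t ≤ T) :
    Matrix (Fin t) (Fin t) R :=
  N.submatrix (Fin.castLE h) (Fin.castLE h)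

noncomputable def leadingSchurComplement (N : Matrix (Fin T) (Fin T) R) (t : Fin T) : R :=
  N t t - (fun j : Fin t => N t (Fin.castLE t.isLt.le j)) ⬝ᵥ
    (N.leadingSubmatrix t.isLt.le)⁻¹ *ᵥ fun i : Fin t => N (Fin.castLE t.isLt.le i) t

theorem det_leadingSubmatrix_succ (N : Matrix (Fin T) (Fin T) R) {t : ℕ} (h : t < T)
    (hN : IsUnit (N.leadingSubmatrix h.le).det) :
    (N.leadingSubmatrix (Nat.succ_le_of_lt h)).det =
      (N.leadingSubmatrix h.le).det * N.leadingSchurComplement ⟨t, h⟩ :=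
  det_succ_eq_det_castSucc_mul_schur _ hN

theorem det_eq_prod_leadingSchurComplement (N : Matrix (Fin T) (Fin T) R)
    (hN : ∀ t (h : t < T), IsUnit (N.leadingSubmatrix h.le).det) :
    N.det = ∏ t, N.leadingSchurComplement t := by
  suffices ∀ t (h : t ≤ T),
      (N.leadingSubmatrix h).det = ∏ i : Fin t, N.leadingSchurComplement (Fin.castLE h i) by
    simpa [leadingSubmatrix] using this T le_rfl
  intro t
  induction t with
  | zero => simp
  | succ t ih =>
    intro h
    rw [det_leadingSubmatrix_succ N h (hN t h), ih (Nat.le_of_succ_le h), Fin.prod_univ_castSucc]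
    rfl

theorem leadingSubmatrix_add_smul_one (N : Matrix (Fin T) (Fin T) R) (c : R) {t : ℕ}
    (h : t ≤ T) :
    (N + c • 1).leadingSubmatrix h = N.leadingSubmatrix h + c • 1 :=
  congrArg (N.leadingSubmatrix h + c • ·) (submatrix_one _ (Fin.castLE_injective h))

theorem leadingSchurComplement_add_smul_one (N : Matrix (Fin T) (Fin T) R) (c : R) (t : Fin T) :
    (N + c • 1).leadingSchurComplement t = N t t + c -
      (fun j : Fin t => N t (Fin.castLE t.isLt.le j)) ⬝ᵥ
        (N.leadingSubmatrix t.isLt.le + c • 1)⁻¹ *ᵥ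
          fun i : Fin t => N (Fin.castLE t.isLt.le i) t := by
  have hne : ∀ i : Fin t, Fin.castLE t.isLt.le i ≠ t := fun i h =>
    i.isLt.ne (congrArg Fin.val h)
  simp [leadingSchurComplement, leadingSubmatrix_add_smul_one, one_apply_ne (hne _),
    one_apply_ne (hne _).symm]

end LeadingSchurComplement

section PosDef

variable {T : ℕ} {N : Matrix (Fin T) (Fin T) ℝ}

theorem PosDef.det_leadingSubmatrix_pos (hN : N.PosDef) {t : ℕ} (h : t ≤ T) :
    0 < (N.leadingSubmatrix h).det :=
  (hN.submatrix (Fin.castLE_injective h)).det_pos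

theorem PosDef.leadingSchurComplement_pos (hN : N.PosDef) (t : Fin T) :
    0 < N.leadingSchurComplement t := by
  have hdet := det_leadingSubmatrix_succ N t.isLt (hN.det_leadingSubmatrix_pos t.isLt.le).ne'.isUnit
  exact pos_of_mul_pos_right (hdet ▸ hN.det_leadingSubmatrix_pos _)
    (hN.det_leadingSubmatrix_pos _).le

end PosDef

end Matrix

theorem information_gain_telescopes_general (T : ℕ) (σ : ℝ) (hσ : 0 < σ)
    (K : Matrix (Fin T) (Fin T) ℝ) (hpsd : K.PosSemidef) :
    let s2 : Fin T → ℝ := fun t =>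
      K t t -
        (fun i : Fin t => K (Fin.castLE t.isLt.le i) t) ⬝ᵥ
          ((Matrix.of fun i j : Fin t =>
              K (Fin.castLE t.isLt.le i) (Fin.castLE t.isLt.le j)) +
            σ ^ 2 • (1 : Matrix (Fin t) (Fin t) ℝ))⁻¹.mulVec
            (fun i : Fin t => K (Fin.castLE t.isLt.le i) t)
    (1 + (σ ^ 2)⁻¹ • K).det = ∏ t, (1 + (σ ^ 2)⁻¹ * s2 t) ∧
      (1 / 2) * Real.log (1 + (σ ^ 2)⁻¹ • K).det =
        (1 / 2) * ∑ t, Real.log (1 + (σ ^ 2)⁻¹ * s2 t) := by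
  intro s2
  have hσ2 : 0 < σ ^ 2 := pow_pos hσ 2
  have hN : (K + σ ^ 2 • 1).PosDef := PosDef.posSemidef_add hpsd (PosDef.one.smul hσ2)
  have hpivot : ∀ t,
      (K + σ ^ 2 • 1).leadingSchurComplement t = σ ^ 2 * (1 + (σ ^ 2)⁻¹ * s2 t) := by
    intro t
    have hrow : (fun j : Fin t => K t (Fin.castLE t.isLt.le j)) =
        fun i => K (Fin.castLE t.isLt.le i) t := funext fun j => hpsd.isHermitian.apply _ _
    rw [leadingSchurComplement_add_smul_one, hrow, mul_add, mul_one, mul_inv_cancel_left₀ hσ2.ne']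
    exact (add_sub_right_comm _ _ _).trans (add_comm _ _)
  have hdet : (1 + (σ ^ 2)⁻¹ • K).det = ∏ t, (1 + (σ ^ 2)⁻¹ * s2 t) := by
    have hscale : K + σ ^ 2 • 1 = σ ^ 2 • (1 + (σ ^ 2)⁻¹ • K) := by
      rw [smul_add, smul_inv_smul₀ hσ2.ne', add_comm]
    have hdetN := det_eq_prod_leadingSchurComplement _ fun _ h =>
      (hN.det_leadingSubmatrix_pos h.le).ne'.isUnit
    simp only [hpivot, Finset.prod_mul_distrib, Finset.prod_const, Finset.card_univ,
      Fintype.card_fin] at hdetN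
    rw [hscale, det_smul, Fintype.card_fin] at hdetN
    exact mul_left_cancel₀ (pow_ne_zero _ hσ2.ne') hdetN
  have hpos : ∀ t, 0 < 1 + (σ ^ 2)⁻¹ * s2 t := fun t =>
    pos_of_mul_pos_right (hpivot t ▸ hN.leadingSchurComplement_pos t) hσ2.le
  exact ⟨hdet, by rw [hdet, Real.log_prod fun t _ => (hpos t).ne']⟩

/-- Information-gain decomposition: for a symmetric positive semidefinite kernel Gram matrix
`K` and noise standard deviation `σ > 0`, with `s_t²` the GP predictive variance at step `t`
(computed from the leading principal `t × t` submatrix), the determinant telescopes: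
`det (I + σ⁻² K) = ∏ t, (1 + σ⁻² s_t²)`, equivalently
`½ log det (I + σ⁻² K) = ½ ∑ t, log (1 + σ⁻² s_t²)`. -/
theorem information_gain_telescopes (T : ℕ) (σ : ℝ) (hσ : 0 < σ)
    (K : Matrix (Fin T) (Fin T) ℝ) (hsym : K.IsSymm) (hpsd : K.PosSemidef) :
    let s2 : Fin T → ℝ := fun t =>
      K t t -
        (fun i : Fin t => K (Fin.castLE t.isLt.le i) t) ⬝ᵥ
          ((Matrix.of fun i j : Fin t =>
              K (Fin.castLE t.isLt.le i) (Fin.castLE t.isLt.le j)) +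
            σ ^ 2 • (1 : Matrix (Fin t) (Fin t) ℝ))⁻¹.mulVec
            (fun i : Fin t => K (Fin.castLE t.isLt.le i) t)
    (1 + (σ ^ 2)⁻¹ • K).det = ∏ t, (1 + (σ ^ 2)⁻¹ * s2 t) ∧
      (1 / 2) * Real.log (1 + (σ ^ 2)⁻¹ • K).det =
        (1 / 2) * ∑ t, Real.log (1 + (σ ^ 2)⁻¹ * s2 t) :=
  information_gain_telescopes_general T σ hσ K hpsd
end

section
/- Let n ∈ ℕ and let M be a real symmetric positive semidefinite (n+1)×(n+1) matrix, and let M' be its leading principal n×n submatrix (the submatrix on the indices i < n, obtained via Fin.castSucc). Then Matrix.det (1 + M) ≥ Matrix.det (1 + M'), where 1 denotes the identity matrix of the appropriate size. In particular, the quantity log det(I + σ⁻² K_A) is nondecreasing under enlarging the set A of kernel evaluation points, so the maximal information gain γ_T is nondecreasing in T. -/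
/-!
Write `M = Bᴴ B` and let `E` be an isometry (`Eᴴ E = 1`), e.g. the inclusion of a set of
coordinates. By Sylvester's identity `det (1 + Eᴴ M E) = det (1 + (B E)(B E)ᴴ)` and
`det (1 + M) = det (1 + B Bᴴ)`, and `B Bᴴ` exceeds `(B E)(B E)ᴴ` by `(B Q)(B Q)ᴴ` with
`Q = 1 - E Eᴴ` the complementary orthogonal projection. Adding `D Dᴴ` to a positive definite `A`
multiplies the determinant by `det (1 + Dᴴ A⁻¹ D) ≥ 1`.
-/

open scoped ComplexOrder MatrixOrder

namespace Matrix

section Semiring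

variable {R ι κ : Type*} [Semiring R] [StarRing R] [Fintype ι] [DecidableEq ι]

theorem conjTranspose_mul_mul_submatrix_one (M : Matrix ι ι R) (e : κ → ι) :
    ((1 : Matrix ι ι R).submatrix id e)ᴴ * M * (1 : Matrix ι ι R).submatrix id e =
      M.submatrix e e := by
  ext i j
  simp [mul_apply, one_apply]

theorem conjTranspose_submatrix_one_mul_submatrix_one [DecidableEq κ] {e : κ → ι}
    (he : Function.Injective e) :
    ((1 : Matrix ι ι R).submatrix id e)ᴴ * (1 : Matrix ι ι R).submatrix id e = 1 := by
  rw [← Matrix.mul_one (_ᴴ), conjTranspose_mul_mul_submatrix_one, submatrix_one e he]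

omit [DecidableEq ι] in
theorem isIdempotentElem_mul_conjTranspose [Fintype κ] [DecidableEq κ] {E : Matrix ι κ R}
    (hE : Eᴴ * E = 1) : IsIdempotentElem (E * Eᴴ) := by
  rw [IsIdempotentElem, Matrix.mul_assoc, ← Matrix.mul_assoc Eᴴ, hE, Matrix.one_mul]

end Semiring

variable {𝕜 ι κ : Type*} [RCLike 𝕜] [Fintype ι] [DecidableEq ι]

theorem PosSemidef.one_le_det_one_add {N : Matrix ι ι 𝕜} (hN : N.PosSemidef) :
    1 ≤ (1 + N).det := by
  rw [hN.1.spectral_theorem, Unitary.conjStarAlgAut_apply, det_one_add_mul_comm, ← mul_assoc,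
    Unitary.coe_star_mul_self, one_mul, ← diagonal_one, diagonal_add, det_diagonal]
  simp only [Function.comp_apply]
  norm_cast
  exact Finset.one_le_prod fun i _ => le_add_of_nonneg_right (hN.eigenvalues_nonneg i)

theorem PosDef.det_le_det_add_mul_conjTranspose [Fintype κ] {A : Matrix ι ι 𝕜} (hA : A.PosDef)
    (D : Matrix ι κ 𝕜) : A.det ≤ (A + D * Dᴴ).det := by
  classical
  rw [det_add_mul D Dᴴ hA.det_pos.ne'.isUnit]
  calc A.det = A.det * 1 := (mul_one _).symm
    _ ≤ _ := mul_le_mul_of_nonneg_left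
      (hA.inv.posSemidef.conjTranspose_mul_mul_same D).one_le_det_one_add hA.det_pos.le

theorem PosSemidef.det_one_add_conjTranspose_mul_mul_le [Fintype κ] [DecidableEq κ]
    {M : Matrix ι ι 𝕜} (hM : M.PosSemidef) {E : Matrix ι κ 𝕜} (hE : Eᴴ * E = 1) :
    (1 + Eᴴ * M * E).det ≤ (1 + M).det := by
  obtain ⟨B, rfl⟩ := CStarAlgebra.nonneg_iff_eq_star_mul_self.mp hM.nonneg
  rw [star_eq_conjTranspose]
  set Q := 1 - E * Eᴴ
  have hQ : Q * Qᴴ = Q := by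
    rw [show Qᴴ = Q by simp [Q]]
    exact (isIdempotentElem_mul_conjTranspose hE).one_sub
  have hsplit : B * Bᴴ = B * E * (B * E)ᴴ + B * Q * (B * Q)ᴴ :=
    calc B * Bᴴ = B * (E * Eᴴ + Q * Qᴴ) * Bᴴ := by rw [hQ, add_sub_cancel, Matrix.mul_one]
      _ = _ := by simp only [conjTranspose_mul, Matrix.mul_add, Matrix.add_mul, Matrix.mul_assoc]
  calc (1 + Eᴴ * (Bᴴ * B) * E).det = (1 + (B * E)ᴴ * (B * E)).det := by
        simp only [conjTranspose_mul, Matrix.mul_assoc]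
    _ = (1 + B * E * (B * E)ᴴ).det := det_one_add_mul_comm _ _
    _ ≤ (1 + B * E * (B * E)ᴴ + B * Q * (B * Q)ᴴ).det :=
        PosDef.det_le_det_add_mul_conjTranspose
          (PosDef.one.add_posSemidef (posSemidef_self_mul_conjTranspose _)) _
    _ = (1 + Bᴴ * B).det := by rw [add_assoc, ← hsplit, det_one_add_mul_comm]

theorem PosSemidef.det_one_add_submatrix_le [Fintype κ] [DecidableEq κ] {M : Matrix ι ι 𝕜}
    (hM : M.PosSemidef) {e : κ → ι} (he : Function.Injective e) :
    (1 + M.submatrix e e).det ≤ (1 + M).det := by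
  rw [← conjTranspose_mul_mul_submatrix_one]
  exact hM.det_one_add_conjTranspose_mul_mul_le (conjTranspose_submatrix_one_mul_submatrix_one he)

end Matrix

open Matrix

/-- Monotonicity of the information gain: for a real symmetric positive semidefinite
`(n+1) × (n+1)` matrix `M` with leading principal `n × n` submatrix `M'`,
`det (I + M') ≤ det (I + M)`. Hence `log det (I + σ⁻² K_A)` is nondecreasing under
enlarging the set `A` of kernel evaluation points. -/
theorem det_one_add_submatrix_le (n : ℕ) (M : Matrix (Fin (n + 1)) (Fin (n + 1)) ℝ)
    (hpsd : M.PosSemidef) :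
    (1 + M.submatrix Fin.castSucc Fin.castSucc).det ≤ (1 + M).det :=
  hpsd.det_one_add_submatrix_le (Fin.castSucc_injective n)
end
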